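/- arXiv:0808.0039 — 4 statements merged into one kernel-verified Lean document; each statement's English description precedes it below -/
import Mathlib

section
/- For every real z > 0 one has the identity h(z−1) − (√z − 1)² = 2·√z·(√z·log(√z) − √z + 1), and consequently h(z−1) ≥ (√z − 1)² for every z > 0. -/
/-! Substituting `z = s²` makes the identity pure algebra (`log z = 2 log s`); the inequality
then follows from `s log s - s + 1 ≥ 0`, i.e. `x - 1 ≤ x log x`. -/

/-- The function `h(z) = (1+z)·log(1+z) − z`, defined for `z > −1`. -/
noncomputable def entropyH (z : ℝ) : ℝ := (1 + z) * Real.log (1 + z) - z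

open Real

lemma entropyH_sub_one (z : ℝ) : entropyH (z - 1) = z * log z - z + 1 := by
  rw [entropyH, add_sub_cancel]
  ring

lemma entropyH_sq_sub_one_sub_sq (s : ℝ) :
    entropyH (s ^ 2 - 1) - (s - 1) ^ 2 = 2 * s * (s * log s - s + 1) := by
  rw [entropyH_sub_one, log_pow]
  push_cast
  ring

/-- For every real `z > 0` one has the identity
`h(z−1) − (√z − 1)² = 2·√z·(√z·log √z − √z + 1)`, and consequently
`h(z−1) ≥ (√z − 1)²`. -/
theorem entropyH_sub_one_sub_sq_sqrt_eq (z : ℝ) (hz : 0 < z) :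
    entropyH (z - 1) - (Real.sqrt z - 1) ^ 2 =
      2 * Real.sqrt z *
        (Real.sqrt z * Real.log (Real.sqrt z) - Real.sqrt z + 1) ∧
    (Real.sqrt z - 1) ^ 2 ≤ entropyH (z - 1) := by
  have hid := entropyH_sq_sub_one_sub_sq (√z)
  rw [sq_sqrt hz.le] at hid
  refine ⟨hid, sub_nonneg.mp ?_⟩
  rw [hid]
  have hxlogx := self_sub_one_le_mul_log (sqrt_nonneg z)
  exact mul_nonneg (by positivity) (by linarith)
end

section
/- For every real z > −1 one has h(|z|) ≤ h(z); consequently, for every ζ > 0 and every z > −1, the Young-type inequality ζ·|z| ≤ h(z) + h*(ζ) holds. -/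
/-- The Legendre dual `h*(ζ) = exp(ζ) − ζ − 1` of `h`. -/
noncomputable def entropyHStar (ζ : ℝ) : ℝ := Real.exp ζ - ζ - 1

/-!
The quadratic `z ^ 2 / 2` separates the two sides of `h(|z|) ≤ h(z)`: since `h'' z = 1 / (1 + z)`,
`h` lies below it on `[0, ∞)` and above it on `(-1, 0]`; both bounds come from
`log x ≤ sinh (log x) = (x - x⁻¹) / 2` for `x ≥ 1`. The first claim reduces the Young inequality to
`|z|` in place of `z`, where `ζ z ≤ h(z) + h*(ζ)` says that `exp` lies above its tangent line
at `log (1 + z)`.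
-/

open Real

lemma Real.log_le_sub_inv_div_two {x : ℝ} (hx : 1 ≤ x) : log x ≤ (x - x⁻¹) / 2 :=
  sinh_log (by linarith) ▸ self_le_sinh_iff.mpr (log_nonneg hx)

lemma entropyH_le_sq_div_two {z : ℝ} (hz : 0 ≤ z) : entropyH z ≤ z ^ 2 / 2 := by
  have hpos : 0 < 1 + z := by linarith
  have hlog := mul_le_mul_of_nonneg_left (log_le_sub_inv_div_two (by linarith : 1 ≤ 1 + z))
    hpos.le
  have hsimp : (1 + z) * ((1 + z - (1 + z)⁻¹) / 2) = z + z ^ 2 / 2 := by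
    field_simp
    ring
  unfold entropyH
  linarith

lemma sq_div_two_le_entropyH {z : ℝ} (hz₁ : -1 < z) (hz₀ : z ≤ 0) : z ^ 2 / 2 ≤ entropyH z := by
  have hpos : 0 < 1 + z := by linarith
  have hlog := mul_le_mul_of_nonneg_left
    (log_le_sub_inv_div_two (one_le_inv₀ hpos |>.mpr (by linarith))) hpos.le
  rw [log_inv, inv_inv] at hlog
  have hsimp : (1 + z) * (((1 + z)⁻¹ - (1 + z)) / 2) = -z - z ^ 2 / 2 := by
    field_simp
    ring
  unfold entropyH
  linarith

lemma entropyH_abs_le {z : ℝ} (hz : -1 < z) : entropyH |z| ≤ entropyH z := by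
  rcases le_or_gt 0 z with hnonneg | hneg
  · rw [abs_of_nonneg hnonneg]
  · calc entropyH |z| ≤ |z| ^ 2 / 2 := entropyH_le_sq_div_two (abs_nonneg z)
      _ = z ^ 2 / 2 := by rw [sq_abs]
      _ ≤ entropyH z := sq_div_two_le_entropyH hz hneg.le

lemma mul_le_entropyH_add_entropyHStar (ζ : ℝ) {z : ℝ} (hz : -1 < z) :
    ζ * z ≤ entropyH z + entropyHStar ζ := by
  have hpos : 0 < 1 + z := by linarith
  have htangent : (1 + z) * (ζ - log (1 + z) + 1) ≤ exp ζ := by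
    have := mul_le_mul_of_nonneg_left (add_one_le_exp (ζ - log (1 + z))) hpos.le
    rwa [exp_sub, exp_log hpos, mul_div_cancel₀ _ hpos.ne'] at this
  unfold entropyH entropyHStar
  linear_combination htangent

/-- For every real `z > −1` one has `h(|z|) ≤ h(z)`; consequently, for every
`ζ > 0` and every `z > −1` the Young-type inequality `ζ·|z| ≤ h(z) + h*(ζ)`
holds. -/
theorem entropyH_abs_le_and_young :
    (∀ z : ℝ, -1 < z → entropyH |z| ≤ entropyH z) ∧
    (∀ ζ z : ℝ, 0 < ζ → -1 < z → ζ * |z| ≤ entropyH z + entropyHStar ζ) := by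
  refine ⟨fun z hz => entropyH_abs_le hz, fun ζ z _ hz => ?_⟩
  calc ζ * |z| ≤ entropyH |z| + entropyHStar ζ :=
        mul_le_entropyH_add_entropyHStar ζ (by linarith [abs_nonneg z])
    _ ≤ entropyH z + entropyHStar ζ := by gcongr; exact entropyH_abs_le hz
end

section
/- (Product Limit Theorem) Let μ be a finite, positive Borel measure on a Borel subset X of ℝ^N. Let (φ_n) and (ψ_n) be sequences of real-valued measurable functions on X such that: (i) there is a constant C with |ψ_n| ≤ C μ-almost everywhere for all n, and ψ_n → ψ μ-almost everywhere on X; (ii) φ_n and φ belong to L¹(μ) and φ_n → φ weakly in L¹(μ), i.e. ∫ φ_n·g dμ → ∫ φ·g dμ for every bounded measurable g. Then the products satisfy φ_n·ψ_n → φ·ψ weakly in L¹(μ), i.e. ∫ φ_n·ψ_n·g dμ → ∫ φ·ψ·g dμ for every bounded measurable g. -/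
/-!
A weakly convergent sequence `φ n` in `L¹` is bounded in norm (Banach–Steinhaus, acting on `L∞`)
and uniformly integrable (Vitali–Hahn–Saks: Baire category on the complete metric space of
indicators of measurable sets, where `A ↦ ∫_A φ n` are continuous and pointwise convergent).
Now split `φ n ψ n = φ n (ψ n - ψ) + φ n ψ`. The second term converges weakly by hypothesis.
By Egorov, `ψ n → ψ` uniformly off a set of small measure; off it the first term is small by the
norm bound, and on it by uniform integrability.
-/

open MeasureTheory Filter Set Topology
open scoped symmDiff

variable {α : Type*} [MeasurableSpace α] {μ : Measure α}

theorem eLpNorm_one_eq_ofReal_integral_abs {f : α → ℝ} (hf : Integrable f μ) :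
    eLpNorm f 1 μ = ENNReal.ofReal (∫ x, |f x| ∂μ) := by
  rw [← ofReal_lpNorm (memLp_one_iff_integrable.2 hf), lpNorm_one_eq_integral_norm hf.1]
  rfl

theorem unifIntegrable_one_iff {ι : Type*} {φ : ι → α → ℝ} (hφ : ∀ i, Integrable (φ i) μ) :
    UnifIntegrable φ 1 μ ↔ ∀ ε > 0, ∃ δ > 0, ∀ i s, MeasurableSet s →
      μ s ≤ ENNReal.ofReal δ → ∫ x in s, |φ i x| ∂μ ≤ ε := by
  have key : ∀ i s, MeasurableSet s → ∀ ε > 0,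
      (eLpNorm (s.indicator (φ i)) 1 μ ≤ ENNReal.ofReal ε ↔ ∫ x in s, |φ i x| ∂μ ≤ ε) :=
    fun i s hs ε hε => by
      rw [eLpNorm_indicator_eq_eLpNorm_restrict hs,
        eLpNorm_one_eq_ofReal_integral_abs (hφ i).restrict, ENNReal.ofReal_le_ofReal_iff hε.le]
  refine forall₂_congr fun ε hε => exists_congr fun δ => ?_
  rw [exists_prop]
  exact and_congr_right fun _ => forall₄_congr fun i s hs _ => key i s hs ε hε

theorem MeasureTheory.Integrable.exists_setIntegral_abs_le {f : α → ℝ} (hf : Integrable f μ)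
    {ε : ℝ} (hε : 0 < ε) : ∃ δ > 0, ∀ s, MeasurableSet s → μ s ≤ ENNReal.ofReal δ →
      ∫ x in s, |f x| ∂μ ≤ ε :=
  ((unifIntegrable_one_iff fun _ : Unit => hf).1
    (unifIntegrable_const le_rfl ENNReal.one_ne_top (memLp_one_iff_integrable.2 hf)) ε hε).imp
    fun _ ⟨hδ, h⟩ => ⟨hδ, h ()⟩

theorem MeasureTheory.Lp.ae_abs_le_norm_top (f : Lp ℝ ⊤ μ) : ∀ᵐ x ∂μ, |f x| ≤ ‖f‖ := by
  rw [Lp.norm_def, toReal_eLpNorm (Lp.aestronglyMeasurable f)]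
  exact ae_le_lpNorm_exponent_top (Lp.memLp f)

theorem ae_abs_le_of_tendsto {ψ : ℕ → α → ℝ} {ψlim : α → ℝ} {C : ℝ}
    (hbd : ∀ n, ∀ᵐ x ∂μ, |ψ n x| ≤ C)
    (hlim : ∀ᵐ x ∂μ, Tendsto (fun n => ψ n x) atTop (𝓝 (ψlim x))) :
    ∀ᵐ x ∂μ, |ψlim x| ≤ C := by
  filter_upwards [ae_all_iff.2 hbd, hlim] with x hx hxlim
  exact le_of_tendsto' hxlim.abs hx

theorem setIntegral_sub_setIntegral {f : α → ℝ} (hf : Integrable f μ) {A B : Set α}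
    (hA : MeasurableSet A) (hB : MeasurableSet B) :
    ∫ x in A, f x ∂μ - ∫ x in B, f x ∂μ = ∫ x in A \ B, f x ∂μ - ∫ x in B \ A, f x ∂μ := by
  have hA' := integral_inter_add_sdiff hB (hf.integrableOn (s := A))
  have hB' := integral_inter_add_sdiff hA (hf.integrableOn (s := B))
  rw [inter_comm] at hB'
  linarith

theorem setIntegral_abs_le_two_mul_of_forall_subset {f : α → ℝ} (hf : Measurable f)
    (hfi : Integrable f μ) {s : Set α} (hs : MeasurableSet s) {η : ℝ}
    (h : ∀ t ⊆ s, MeasurableSet t → |∫ x in t, f x ∂μ| ≤ η) :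
    ∫ x in s, |f x| ∂μ ≤ 2 * η := by
  have hpos : MeasurableSet {x | 0 ≤ f x} := measurableSet_le measurable_const hf
  rw [← integral_inter_add_sdiff hpos hfi.abs.integrableOn]
  have h₁ : ∫ x in s ∩ {x | 0 ≤ f x}, |f x| ∂μ = ∫ x in s ∩ {x | 0 ≤ f x}, f x ∂μ :=
    setIntegral_congr_fun (hs.inter hpos) fun x hx => abs_of_nonneg hx.2
  have h₂ : ∫ x in s \ {x | 0 ≤ f x}, |f x| ∂μ = -∫ x in s \ {x | 0 ≤ f x}, f x ∂μ := by
    rw [← integral_neg]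
    exact setIntegral_congr_fun (hs.diff hpos) fun x hx => abs_of_neg (not_le.1 hx.2)
  rw [h₁, h₂, two_mul]
  exact add_le_add ((le_abs_self _).trans (h _ inter_subset_left (hs.inter hpos)))
    ((neg_le_abs _).trans (h _ sdiff_subset (hs.diff hpos)))

theorem abs_setIntegral_le_two_mul_of_forall_symmDiff_lt [IsFiniteMeasure μ] {f : α → ℝ}
    (hf : Integrable f μ) {A : Set α} (hA : MeasurableSet A) {r η : ℝ}
    (h : ∀ P, MeasurableSet P → μ.real (P ∆ A) < r → |∫ x in P, f x ∂μ| ≤ η)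
    {s : Set α} (hs : MeasurableSet s) (hμs : μ.real s < r) :
    |∫ x in s, f x ∂μ| ≤ 2 * η := by
  have hnear : ∀ P, MeasurableSet P → P ∆ A ⊆ s → |∫ x in P, f x ∂μ| ≤ η := fun P hP hPs =>
    h P hP ((measureReal_mono hPs).trans_lt hμs)
  have hsplit : ∫ x in s, f x ∂μ = ∫ x in A ∪ s, f x ∂μ - ∫ x in A \ s, f x ∂μ := by
    rw [← sdiff_union_self, setIntegral_union disjoint_sdiff_left hs hf.integrableOn
      hf.integrableOn]
    ring
  rw [hsplit, two_mul]
  refine (abs_sub _ _).trans (add_le_add (hnear _ (hA.union hs) ?_) (hnear _ (hA.diff hs) ?_))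
  · intro x; simp only [mem_symmDiff, mem_union]; tauto
  · intro x; simp only [mem_symmDiff, Set.mem_sdiff]; tauto

-- The measure algebra of `μ`, realised inside `L¹` so that it is a complete metric space.
def indicatorsL1 (μ : Measure α) : Set (Lp ℝ 1 μ) :=
  {u | ∀ᵐ x ∂μ, u x = 0 ∨ u x = 1}

theorem isClosed_indicatorsL1 : IsClosed (indicatorsL1 μ) := by
  refine IsSeqClosed.isClosed fun u v hu hlim => ?_
  obtain ⟨ns, -, hae⟩ := (tendstoInMeasure_of_tendsto_Lp hlim).exists_seq_tendsto_ae
  filter_upwards [hae, ae_all_iff.2 fun i => hu (ns i)] with x hx hux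
  exact (Set.toFinite ({0, 1} : Set ℝ)).isClosed.mem_of_tendsto hx (.of_forall hux)

theorem indicatorConstLp_mem_indicatorsL1 {A : Set α} (hA : MeasurableSet A) (hμA : μ A ≠ ⊤) :
    indicatorConstLp 1 hA hμA (1 : ℝ) ∈ indicatorsL1 μ := by
  filter_upwards [indicatorConstLp_coeFn (p := 1) (hs := hA) (hμs := hμA) (c := (1 : ℝ))]
    with x hx
  by_cases h : x ∈ A <;> simp [hx, h]

theorem exists_eq_indicatorConstLp_of_mem_indicatorsL1 [IsFiniteMeasure μ] {u : Lp ℝ 1 μ}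
    (hu : u ∈ indicatorsL1 μ) :
    ∃ A, ∃ hA : MeasurableSet A, u = indicatorConstLp 1 hA (measure_ne_top μ A) 1 := by
  have hA : MeasurableSet {x | u x = 1} :=
    (Lp.stronglyMeasurable u).measurable (measurableSet_singleton 1)
  refine ⟨_, hA, Lp.ext ?_⟩
  filter_upwards [hu, indicatorConstLp_coeFn (p := 1) (hs := hA) (hμs := measure_ne_top μ _)
    (c := (1 : ℝ))] with x hx hx'
  rcases hx with h | h <;> simp [hx', h]

theorem integral_mul_indicatorConstLp {A : Set α} (hA : MeasurableSet A) (hμA : μ A ≠ ⊤)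
    (f : α → ℝ) :
    ∫ x, f x * (indicatorConstLp 1 hA hμA (1 : ℝ) : α → ℝ) x ∂μ = ∫ x in A, f x ∂μ := by
  rw [← integral_indicator hA]
  refine integral_congr_ae ?_
  filter_upwards [indicatorConstLp_coeFn (p := 1) (hs := hA) (hμs := hμA) (c := (1 : ℝ))]
    with x hx
  by_cases h : x ∈ A <;> simp [hx, h]

theorem dist_indicatorConstLp_one {A B : Set α} (hA : MeasurableSet A) (hB : MeasurableSet B)
    (hμA : μ A ≠ ⊤) (hμB : μ B ≠ ⊤) :
    dist (indicatorConstLp 1 hA hμA (1 : ℝ)) (indicatorConstLp 1 hB hμB (1 : ℝ)) =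
      μ.real (A ∆ B) := by
  rw [dist_indicatorConstLp_eq_norm, norm_indicatorConstLp one_ne_zero ENNReal.one_ne_top]
  simp

theorem continuousOn_integral_mul_indicatorsL1 [IsFiniteMeasure μ] {f : α → ℝ}
    (hf : Integrable f μ) :
    ContinuousOn (fun u : Lp ℝ 1 μ => ∫ x, f x * u x ∂μ) (indicatorsL1 μ) := by
  rw [Metric.continuousOn_iff]
  intro v hv ε hε
  obtain ⟨δ, hδ, habs⟩ := hf.exists_setIntegral_abs_le (by positivity : 0 < ε / 3)
  refine ⟨δ, hδ, fun u hu huv => ?_⟩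
  obtain ⟨A, hA, rfl⟩ := exists_eq_indicatorConstLp_of_mem_indicatorsL1 hu
  obtain ⟨B, hB, rfl⟩ := exists_eq_indicatorConstLp_of_mem_indicatorsL1 hv
  rw [dist_indicatorConstLp_one] at huv
  have hsmall : ∀ t ⊆ A ∆ B, MeasurableSet t → |∫ x in t, f x ∂μ| ≤ ε / 3 := fun t ht htm =>
    abs_integral_le_integral_abs.trans <| habs t htm <| (measure_mono ht).trans <| by
      rw [← ofReal_measureReal]; exact ENNReal.ofReal_le_ofReal huv.le
  simp only [integral_mul_indicatorConstLp, Real.dist_eq, setIntegral_sub_setIntegral hf hA hB]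
  calc |∫ x in A \ B, f x ∂μ - ∫ x in B \ A, f x ∂μ|
      ≤ |∫ x in A \ B, f x ∂μ| + |∫ x in B \ A, f x ∂μ| := abs_sub _ _
    _ ≤ ε / 3 + ε / 3 := add_le_add (hsmall _ (fun x hx => Or.inl hx) (hA.diff hB))
        (hsmall _ (fun x hx => Or.inr hx) (hB.diff hA))
    _ < ε := by linarith

theorem tendsto_integral_mul_of_unifIntegrable [IsFiniteMeasure μ] {φ h : ℕ → α → ℝ}
    (hφi : ∀ n, Integrable (φ n) μ) (hui : UnifIntegrable φ 1 μ) {M : ℝ}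
    (hM : ∀ n, ∫ x, |φ n x| ∂μ ≤ M) (hh : ∀ n, Measurable (h n)) {K : ℝ}
    (hK : ∀ n, ∀ᵐ x ∂μ, |h n x| ≤ K) (hlim : ∀ᵐ x ∂μ, Tendsto (fun n => h n x) atTop (𝓝 0)) :
    Tendsto (fun n => ∫ x, φ n x * h n x ∂μ) atTop (𝓝 0) := by
  rw [unifIntegrable_one_iff hφi] at hui
  rw [Metric.tendsto_atTop]
  intro ε hε
  set K' := |K| + 1
  set M' := |M| + 1
  set η := ε / (4 * M')
  obtain ⟨δ, hδ, hsmall⟩ := hui (ε / (4 * K')) (by positivity)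
  obtain ⟨t, ht, hμt, hunif⟩ := tendstoUniformlyOn_of_ae_tendsto'
    (fun n => (hh n).stronglyMeasurable) stronglyMeasurable_const hlim hδ
  obtain ⟨N, hN⟩ := eventually_atTop.1
    (Metric.tendstoUniformlyOn_iff.1 hunif η (by positivity))
  refine ⟨N, fun n hn => ?_⟩
  have hbound : ∀ᵐ x ∂μ,
      |φ n x * h n x| ≤ K' * t.indicator (fun x => |φ n x|) x + η * |φ n x| := by
    filter_upwards [hK n] with x hx
    rw [abs_mul]
    by_cases hxt : x ∈ t
    · rw [indicator_of_mem hxt]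
      have hhK : |h n x| ≤ K' := hx.trans ((le_abs_self K).trans (lt_add_one _).le)
      have hη : 0 ≤ η * |φ n x| := by positivity
      linarith [mul_le_mul_of_nonneg_left hhK (abs_nonneg (φ n x))]
    · have : |h n x| < η := by simpa [Real.dist_eq, abs_sub_comm] using hN n hn x hxt
      rw [indicator_of_notMem hxt, mul_zero, zero_add, mul_comm]
      exact mul_le_mul_of_nonneg_right this.le (abs_nonneg _)
  have hint : Integrable (fun x => K' * t.indicator (fun x => |φ n x|) x + η * |φ n x|) μ :=
    (((hφi n).abs.indicator ht).const_mul K').add ((hφi n).abs.const_mul η)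
  calc dist (∫ x, φ n x * h n x ∂μ) 0
      ≤ ∫ x, |φ n x * h n x| ∂μ := by
        rw [Real.dist_eq, sub_zero]; exact abs_integral_le_integral_abs
    _ ≤ ∫ x, (K' * t.indicator (fun x => |φ n x|) x + η * |φ n x|) ∂μ :=
        integral_mono_of_nonneg (.of_forall fun _ => abs_nonneg _) hint hbound
    _ = K' * ∫ x in t, |φ n x| ∂μ + η * ∫ x, |φ n x| ∂μ := by
        rw [integral_add (((hφi n).abs.indicator ht).const_mul K') ((hφi n).abs.const_mul η),
          integral_const_mul, integral_const_mul, integral_indicator ht]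
    _ ≤ K' * (ε / (4 * K')) + η * M' := by
        gcongr
        · exact hsmall n t ht hμt
        · exact (hM n).trans ((le_abs_self M).trans (lt_add_one _).le)
    _ = ε / 2 := by
        have hK' : 0 < K' := by positivity
        have hM' : 0 < M' := by positivity
        simp only [η]; field_simp; ring
    _ < ε := half_lt_self hε

def TendstoWeaklyL1 (φ : ℕ → α → ℝ) (φlim : α → ℝ) (μ : Measure α) : Prop :=
  ∀ g : α → ℝ, Measurable g → (∃ B, ∀ x, |g x| ≤ B) →
    Tendsto (fun n => ∫ x, φ n x * g x ∂μ) atTop (𝓝 (∫ x, φlim x * g x ∂μ))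

theorem TendstoWeaklyL1.tendsto_of_ae_abs_le {φ : ℕ → α → ℝ} {φlim : α → ℝ}
    (hφ : TendstoWeaklyL1 φ φlim μ) {g : α → ℝ} (hg : Measurable g) {B : ℝ}
    (hB : ∀ᵐ x ∂μ, |g x| ≤ B) :
    Tendsto (fun n => ∫ x, φ n x * g x ∂μ) atTop (𝓝 (∫ x, φlim x * g x ∂μ)) := by
  set g' := {x | |g x| ≤ B}.indicator g
  have hg' : g' =ᵐ[μ] g := by
    filter_upwards [hB] with x hx using indicator_of_mem (show x ∈ {x | |g x| ≤ B} from hx) g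
  have hbdd : ∀ x, |g' x| ≤ max B 0 := fun x => by
    simp only [g', indicator_apply, mem_ofPred_eq]
    split_ifs with hx
    · exact le_max_of_le_left hx
    · simp
  have hint : ∀ f : α → ℝ, ∫ x, f x * g' x ∂μ = ∫ x, f x * g x ∂μ := fun f =>
    integral_congr_ae (hg'.mono fun x hx => by simp only [hx])
  simpa only [hint] using
    hφ g' (hg.indicator (measurableSet_le hg.abs measurable_const)) ⟨_, hbdd⟩

theorem TendstoWeaklyL1.exists_integral_abs_le [IsFiniteMeasure μ] {φ : ℕ → α → ℝ}
    {φlim : α → ℝ} (hφ : TendstoWeaklyL1 φ φlim μ) (hφm : ∀ n, Measurable (φ n))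
    (hφi : ∀ n, Integrable (φ n) μ) : ∃ M, ∀ n, ∫ x, |φ n x| ∂μ ≤ M := by
  let T : ℕ → Lp ℝ ⊤ μ →L[ℝ] ℝ := fun n =>
    (ContinuousLinearMap.mul ℝ ℝ).lpPairing μ 1 ⊤ ((hφi n).toL1 (φ n))
  have hT : ∀ n (f : Lp ℝ ⊤ μ), T n f = ∫ x, φ n x * f x ∂μ := fun n f => by
    rw [ContinuousLinearMap.lpPairing_eq_integral]
    exact integral_congr_ae ((hφi n).coeFn_toL1.mono fun x hx => by
      simp only [ContinuousLinearMap.mul_apply', hx])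
  have hpointwise : ∀ f : Lp ℝ ⊤ μ, ∃ C, ∀ n, ‖T n f‖ ≤ C := fun f => by
    obtain ⟨C, hC⟩ := ((hφ.tendsto_of_ae_abs_le (Lp.stronglyMeasurable f).measurable
      (Lp.ae_abs_le_norm_top f)).norm).bddAbove_range
    exact ⟨C, fun n => hT n f ▸ hC ⟨n, rfl⟩⟩
  obtain ⟨C, hC⟩ := banach_steinhaus hpointwise
  refine ⟨C, fun n => ?_⟩
  let sgn : α → ℝ := fun x => if 0 ≤ φ n x then 1 else -1
  have hsgn : ∀ x, ‖sgn x‖ ≤ 1 := fun x => by by_cases h : 0 ≤ φ n x <;> simp [sgn, h]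
  have hsgnm : MemLp sgn ⊤ μ := memLp_top_of_bound
    (Measurable.ite (measurableSet_le measurable_const (hφm n)) measurable_const
      measurable_const).aestronglyMeasurable 1 (.of_forall hsgn)
  have hnorm : ‖hsgnm.toLp sgn‖ ≤ 1 := by
    refine (Lp.norm_le_of_ae_bound zero_le_one
      (hsgnm.coeFn_toLp.mono fun x hx => hx ▸ hsgn x)).trans ?_
    simp
  have hval : T n (hsgnm.toLp sgn) = ∫ x, |φ n x| ∂μ := by
    rw [hT]
    refine integral_congr_ae (hsgnm.coeFn_toLp.mono fun x hx => ?_)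
    by_cases h : 0 ≤ φ n x <;> simp [hx, sgn, h, abs_of_nonneg, abs_of_neg, not_le.1]
  calc ∫ x, |φ n x| ∂μ ≤ ‖T n‖ * ‖hsgnm.toLp sgn‖ :=
        hval ▸ (le_abs_self _).trans ((T n).le_opNorm _)
    _ ≤ C * 1 := mul_le_mul (hC n) hnorm (norm_nonneg _) ((norm_nonneg _).trans (hC n))
    _ = C := mul_one C

theorem TendstoWeaklyL1.exists_abs_setIntegral_sub_le [IsFiniteMeasure μ] {φ : ℕ → α → ℝ}
    {φlim : α → ℝ} (hφ : TendstoWeaklyL1 φ φlim μ) (hφi : ∀ n, Integrable (φ n) μ) {ε : ℝ}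
    (hε : 0 < ε) : ∃ k, ∃ r > 0, ∀ n ≥ k, ∀ s, MeasurableSet s → μ.real s < r →
      |∫ x in s, φ n x ∂μ - ∫ x in s, φ k x ∂μ| ≤ ε := by
  let S := indicatorsL1 μ
  have : CompleteSpace S := isClosed_indicatorsL1.completeSpace_coe
  have : Nonempty S :=
    ⟨⟨_, indicatorConstLp_mem_indicatorsL1 MeasurableSet.empty (measure_ne_top μ ∅)⟩⟩
  let U : ℕ → S → ℝ := fun n u => ∫ x, φ n x * (u : Lp ℝ 1 μ) x ∂μ
  have hU : ∀ n, Continuous (U n) := fun n =>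
    (continuousOn_integral_mul_indicatorsL1 (hφi n)).domRestrict
  let F : ℕ → Set S := fun k => ⋂ n ≥ k, {u | |U n u - U k u| ≤ ε / 2}
  have hF : ∀ k, IsClosed (F k) := fun k =>
    isClosed_biInter fun n _ => isClosed_le ((hU n).sub (hU k)).abs continuous_const
  have hcover : ⋃ k, F k = univ := by
    refine eq_univ_of_forall fun u => mem_iUnion.2 ?_
    have hu : ∀ᵐ x ∂μ, |(u : Lp ℝ 1 μ) x| ≤ 1 := by
      filter_upwards [(u.2 : (u : Lp ℝ 1 μ) ∈ indicatorsL1 μ)] with x hx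
      rcases hx with h | h <;> simp [h]
    have hconv := hφ.tendsto_of_ae_abs_le (Lp.stronglyMeasurable (u : Lp ℝ 1 μ)).measurable hu
    obtain ⟨k, hk⟩ := Metric.cauchySeq_iff'.1 hconv.cauchySeq (ε / 2) (half_pos hε)
    exact ⟨k, mem_iInter₂.2 fun n hn => (hk n hn).le⟩
  -- Baire category: some `F k` contains a ball around the indicator of a set `A`.
  obtain ⟨k, u₀, hu₀⟩ := nonempty_interior_of_iUnion_of_closed hF hcover
  obtain ⟨r, hr, hball⟩ := Metric.mem_nhds_iff.1 (mem_interior_iff_mem_nhds.1 hu₀)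
  obtain ⟨A, hA, hu₀A⟩ := exists_eq_indicatorConstLp_of_mem_indicatorsL1 u₀.2
  refine ⟨k, r, hr, fun n hn s hs hμs => ?_⟩
  have hnear : ∀ P, MeasurableSet P → μ.real (P ∆ A) < r →
      |∫ x in P, (φ n x - φ k x) ∂μ| ≤ ε / 2 := by
    intro P hP hPA
    have hmem : (⟨_, indicatorConstLp_mem_indicatorsL1 hP (measure_ne_top μ P)⟩ : S) ∈ F k :=
      hball (by rwa [Metric.mem_ball, Subtype.dist_eq, hu₀A, dist_indicatorConstLp_one])
    have := mem_iInter₂.1 hmem n hn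
    simp only [U, mem_ofPred_eq, integral_mul_indicatorConstLp] at this
    rwa [integral_sub (hφi n).integrableOn (hφi k).integrableOn]
  have := abs_setIntegral_le_two_mul_of_forall_symmDiff_lt
    (f := fun x => φ n x - φ k x) ((hφi n).sub (hφi k)) hA hnear hs hμs
  rw [integral_sub (hφi n).integrableOn (hφi k).integrableOn] at this
  linarith

theorem TendstoWeaklyL1.unifIntegrable [IsFiniteMeasure μ] {φ : ℕ → α → ℝ} {φlim : α → ℝ}
    (hφ : TendstoWeaklyL1 φ φlim μ) (hφm : ∀ n, Measurable (φ n))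
    (hφi : ∀ n, Integrable (φ n) μ) : UnifIntegrable φ 1 μ := by
  rw [unifIntegrable_one_iff hφi]
  intro ε hε
  obtain ⟨k, r, hr, hk⟩ := hφ.exists_abs_setIntegral_sub_le hφi (by positivity : 0 < ε / 4)
  obtain ⟨δ, hδ, hfin⟩ := (unifIntegrable_one_iff fun i : Fin (k + 1) => hφi i).1
    (unifIntegrable_finite le_rfl ENNReal.one_ne_top fun i => memLp_one_iff_integrable.2 (hφi i))
    (ε / 4) (by positivity)
  refine ⟨min δ (r / 2), by positivity, fun n s hs hμs => ?_⟩
  have hsmall : ∀ t ⊆ s, μ t ≤ ENNReal.ofReal (min δ (r / 2)) := fun t ht =>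
    (measure_mono ht).trans hμs
  have habs : ∀ i ≤ k, ∀ t ⊆ s, MeasurableSet t → ∫ x in t, |φ i x| ∂μ ≤ ε / 4 :=
    fun i hi t ht htm => hfin ⟨i, by omega⟩ t htm
      ((hsmall t ht).trans (ENNReal.ofReal_le_ofReal (min_le_left _ _)))
  refine (setIntegral_abs_le_two_mul_of_forall_subset (hφm n) (hφi n) hs fun t ht htm => ?_).trans
    (by linarith : 2 * (ε / 2) ≤ ε)
  rcases le_or_gt n k with hnk | hkn
  · exact abs_integral_le_integral_abs.trans ((habs n hnk t ht htm).trans (by linarith))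
  · have hμt : μ.real t < r :=
      (ENNReal.toReal_le_of_le_ofReal (by positivity) (hsmall t ht)).trans_lt
        ((min_le_right _ _).trans_lt (half_lt_self hr))
    have h₁ := hk n hkn.le t htm hμt
    have h₂ := abs_integral_le_integral_abs.trans (habs k le_rfl t ht htm)
    calc |∫ x in t, φ n x ∂μ|
        = |(∫ x in t, φ n x ∂μ - ∫ x in t, φ k x ∂μ) + ∫ x in t, φ k x ∂μ| := by ring_nf
      _ ≤ ε / 4 + ε / 4 := (abs_add_le _ _).trans (add_le_add h₁ h₂)
      _ = ε / 2 := by ring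

theorem TendstoWeaklyL1.mul [IsFiniteMeasure μ] {φ ψ : ℕ → α → ℝ} {φlim ψlim : α → ℝ}
    (hφ : TendstoWeaklyL1 φ φlim μ) (hφm : ∀ n, Measurable (φ n))
    (hφi : ∀ n, Integrable (φ n) μ) (hψm : ∀ n, Measurable (ψ n)) (hψlm : Measurable ψlim)
    {C : ℝ} (hψbd : ∀ n, ∀ᵐ x ∂μ, |ψ n x| ≤ C)
    (hψlim : ∀ᵐ x ∂μ, Tendsto (fun n => ψ n x) atTop (𝓝 (ψlim x))) :
    TendstoWeaklyL1 (fun n x => φ n x * ψ n x) (fun x => φlim x * ψlim x) μ := by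
  rintro g hg ⟨B, hB⟩
  have hψlimbd := ae_abs_le_of_tendsto hψbd hψlim
  let h : ℕ → α → ℝ := fun n x => (ψ n x - ψlim x) * g x
  have hhm : ∀ n, Measurable (h n) := fun n => ((hψm n).sub hψlm).mul hg
  have hhbd : ∀ n, ∀ᵐ x ∂μ, |h n x| ≤ 2 * C * B := fun n => by
    filter_upwards [hψbd n, hψlimbd] with x hxn hx
    have hdiff : |ψ n x - ψlim x| ≤ 2 * C := by linarith [abs_sub (ψ n x) (ψlim x)]
    rw [abs_mul]
    exact mul_le_mul hdiff (hB x) (abs_nonneg _) ((abs_nonneg _).trans hdiff)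
  have hgbd : ∀ᵐ x ∂μ, |ψlim x * g x| ≤ C * B := by
    filter_upwards [hψlimbd] with x hx
    rw [abs_mul]
    exact mul_le_mul hx (hB x) (abs_nonneg _) ((abs_nonneg _).trans hx)
  obtain ⟨M, hM⟩ := hφ.exists_integral_abs_le hφm hφi
  have herr : Tendsto (fun n => ∫ x, φ n x * h n x ∂μ) atTop (𝓝 0) :=
    tendsto_integral_mul_of_unifIntegrable hφi (hφ.unifIntegrable hφm hφi) hM hhm hhbd
      (hψlim.mono fun x hx => by simpa using (hx.sub_const (ψlim x)).mul_const (g x))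
  have hψg : Measurable fun x => ψlim x * g x := hψlm.mul hg
  have hmain : Tendsto (fun n => ∫ x, φ n x * (ψlim x * g x) ∂μ) atTop
      (𝓝 (∫ x, φlim x * (ψlim x * g x) ∂μ)) := hφ.tendsto_of_ae_abs_le hψg hgbd
  have hsplit : ∀ n, ∫ x, φ n x * ψ n x * g x ∂μ =
      ∫ x, φ n x * h n x ∂μ + ∫ x, φ n x * (ψlim x * g x) ∂μ := fun n => by
    rw [← integral_add ((hφi n).mul_bdd (hhm n).aestronglyMeasurable
        (by simpa only [Real.norm_eq_abs] using hhbd n))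
      ((hφi n).mul_bdd hψg.aestronglyMeasurable
        (by simpa only [Real.norm_eq_abs] using hgbd))]
    congr 1; ext x; ring
  have hlimit : ∫ x, φlim x * ψlim x * g x ∂μ = ∫ x, φlim x * (ψlim x * g x) ∂μ := by
    simp only [mul_assoc]
  change Tendsto (fun n => ∫ x, φ n x * ψ n x * g x ∂μ) atTop (𝓝 (∫ x, φlim x * ψlim x * g x ∂μ))
  rw [funext hsplit, hlimit]
  simpa using herr.add hmain

theorem product_limit_theorem_general {N : ℕ}
    (X : Set (EuclideanSpace ℝ (Fin N)))
    (μ : Measure X) [IsFiniteMeasure μ]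
    (φ ψ : ℕ → X → ℝ) (φlim ψlim : X → ℝ)
    (hφm : ∀ n, Measurable (φ n)) (hψm : ∀ n, Measurable (ψ n))
    (hψlm : Measurable ψlim)
    (C : ℝ) (hψbd : ∀ n, ∀ᵐ x ∂μ, |ψ n x| ≤ C)
    (hψae : ∀ᵐ x ∂μ, Tendsto (fun n => ψ n x) atTop (nhds (ψlim x)))
    (hφint : ∀ n, Integrable (φ n) μ) (hφlimint : Integrable φlim μ)
    (hφweak : ∀ g : X → ℝ, Measurable g → (∃ B : ℝ, ∀ x, |g x| ≤ B) →
      Tendsto (fun n => ∫ x, φ n x * g x ∂μ) atTop (nhds (∫ x, φlim x * g x ∂μ))) :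
    (∀ n, Integrable (fun x => φ n x * ψ n x) μ) ∧
    Integrable (fun x => φlim x * ψlim x) μ ∧
    (∀ g : X → ℝ, Measurable g → (∃ B : ℝ, ∀ x, |g x| ≤ B) →
      Tendsto (fun n => ∫ x, φ n x * ψ n x * g x ∂μ) atTop
        (nhds (∫ x, φlim x * ψlim x * g x ∂μ))) :=
  ⟨fun n => (hφint n).mul_bdd (hψm n).aestronglyMeasurable
      (by simpa only [Real.norm_eq_abs] using hψbd n),
    hφlimint.mul_bdd hψlm.aestronglyMeasurable
      (by simpa only [Real.norm_eq_abs] using ae_abs_le_of_tendsto hψbd hψae),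
    TendstoWeaklyL1.mul hφweak hφm hφint hψm hψlm hψbd hψae⟩

/-- **Product Limit Theorem.**  Let `μ` be a finite positive Borel measure on a
Borel subset `X` of `ℝ^N`.  Let `(φ n)` and `(ψ n)` be sequences of real-valued
measurable functions on `X` such that `(ψ n)` is uniformly bounded a.e. by a
constant `C` and converges a.e. to `ψ`, while `(φ n)` and its limit `φ` are
integrable and `φ n → φ` weakly in `L¹(μ)` (i.e. tested against every bounded
measurable function).  Then `φ n · ψ n → φ · ψ` weakly in `L¹(μ)`. -/
theorem product_limit_theorem {N : ℕ}
    (X : Set (EuclideanSpace ℝ (Fin N))) (hX : MeasurableSet X)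
    (μ : Measure X) [IsFiniteMeasure μ]
    (φ ψ : ℕ → X → ℝ) (φlim ψlim : X → ℝ)
    (hφm : ∀ n, Measurable (φ n)) (hψm : ∀ n, Measurable (ψ n))
    (hφlm : Measurable φlim) (hψlm : Measurable ψlim)
    (C : ℝ) (hψbd : ∀ n, ∀ᵐ x ∂μ, |ψ n x| ≤ C)
    (hψae : ∀ᵐ x ∂μ, Tendsto (fun n => ψ n x) atTop (nhds (ψlim x)))
    (hφint : ∀ n, Integrable (φ n) μ) (hφlimint : Integrable φlim μ)
    (hφweak : ∀ g : X → ℝ, Measurable g → (∃ B : ℝ, ∀ x, |g x| ≤ B) →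
      Tendsto (fun n => ∫ x, φ n x * g x ∂μ) atTop (nhds (∫ x, φlim x * g x ∂μ))) :
    (∀ n, Integrable (fun x => φ n x * ψ n x) μ) ∧
    Integrable (fun x => φlim x * ψlim x) μ ∧
    (∀ g : X → ℝ, Measurable g → (∃ B : ℝ, ∀ x, |g x| ≤ B) →
      Tendsto (fun n => ∫ x, φ n x * ψ n x * g x ∂μ) atTop
        (nhds (∫ x, φlim x * ψlim x * g x ∂μ))) :=
  product_limit_theorem_general X μ φ ψ φlim ψlim hφm hψm hψlm C hψbd hψae hφint hφlimint hφweak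
end

section
/- Let b̃ ≥ 0 be measurable on ℝ³×S² with b̃(v−v₁,ω) = b̃(v₁−v,ω) = b̃(v′−v′₁,ω) almost everywhere, and suppose sup_{v∈ℝ³} ∬ b̃(v−v₁,ω)·M(v₁) dv₁ dω ≤ 1. Then for every measurable G : ℝ³ → [0,∞), writing Q̃(√G,√G)(v) = ∬ (√(G′·G′₁) − √(G·G₁))·b̃(v−v₁,ω) dω M(v₁) dv₁, one has ∫_{ℝ³} Q̃(√G,√G)(v)²·M(v) dv ≤ ∭ (√(G′·G′₁) − √(G·G₁))² dμ̃, where dμ̃ = b̃(v−v₁,ω)·M(v)·M(v₁) dv dv₁ dω. -/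
open MeasureTheory Filter Set
open scoped RealInnerProductSpace ENNReal

noncomputable section

/-- The standard Gaussian density `M(v) = (2π)^{−3/2} exp(−|v|²/2)` on `ℝ³`. -/
def gaussM (v : EuclideanSpace ℝ (Fin 3)) : ℝ :=
  (2 * Real.pi) ^ (-(3 : ℝ) / 2) * Real.exp (-‖v‖ ^ 2 / 2)

/-- Post-collisional velocity `v′ = v − ((v−v₁)·ω) ω`. -/
def collV (ω : EuclideanSpace ℝ (Fin 3)) (v v₁ : EuclideanSpace ℝ (Fin 3)) :
    EuclideanSpace ℝ (Fin 3) := v - ⟪v - v₁, ω⟫ • ω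

/-- Post-collisional velocity `v′₁ = v₁ + ((v−v₁)·ω) ω`. -/
def collV₁ (ω : EuclideanSpace ℝ (Fin 3)) (v v₁ : EuclideanSpace ℝ (Fin 3)) :
    EuclideanSpace ℝ (Fin 3) := v₁ + ⟪v - v₁, ω⟫ • ω

/-- The surface measure `dω` on the unit sphere `S² ⊂ ℝ³`. -/
def sphereMeasure : Measure (Metric.sphere (0 : EuclideanSpace ℝ (Fin 3)) 1) :=
  (volume : Measure (EuclideanSpace ℝ (Fin 3))).toSphere

/-- The measure `dμ̃ = b̃(v−v₁,ω)·M(v)·M(v₁) dv dv₁ dω` on `ℝ³×ℝ³×S²`. -/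
def collMeasure
    (b : EuclideanSpace ℝ (Fin 3) → Metric.sphere (0 : EuclideanSpace ℝ (Fin 3)) 1 → ℝ) :
    Measure ((EuclideanSpace ℝ (Fin 3) × EuclideanSpace ℝ (Fin 3)) ×
      Metric.sphere (0 : EuclideanSpace ℝ (Fin 3)) 1) :=
  (((volume : Measure (EuclideanSpace ℝ (Fin 3) × EuclideanSpace ℝ (Fin 3))).prod
      sphereMeasure)).withDensity
    fun q => ENNReal.ofReal (b (q.1.1 - q.1.2) q.2 * gaussM q.1.1 * gaussM q.1.2)

/-- `Q̃(√G,√G)(v) = ∬ (√(G′G′₁) − √(GG₁)) b̃(v−v₁,ω) dω M(v₁) dv₁`. -/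
def QtildeSqrt
    (btilde : EuclideanSpace ℝ (Fin 3) → Metric.sphere (0 : EuclideanSpace ℝ (Fin 3)) 1 → ℝ)
    (G : EuclideanSpace ℝ (Fin 3) → ℝ) (v : EuclideanSpace ℝ (Fin 3)) : ℝ :=
  ∫ v₁, (∫ ω,
      (Real.sqrt (G (collV (ω : EuclideanSpace ℝ (Fin 3)) v v₁) *
            G (collV₁ (ω : EuclideanSpace ℝ (Fin 3)) v v₁))
        - Real.sqrt (G v * G v₁)) * btilde (v - v₁) ω ∂sphereMeasure) * gaussM v₁

/-!
For fixed `v`, the kernel `b̃(v−v₁,ω) M(v₁) dv₁ dω` is a sub-probability measure on `ℝ³ × S²`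
by the sup bound, and `Q̃(√G,√G)(v)` is the average of `√(G′G′₁) − √(GG₁)` against it.
Cauchy–Schwarz bounds the square of that average by the average of the square; integrating
against `M(v) dv` and using Tonelli turns the right-hand side into the integral over `μ̃`.
-/

theorem ENNReal.sq_lintegral_le_of_measure_univ_le_one {α : Type*} [MeasurableSpace α]
    {μ : Measure α} (hμ : μ univ ≤ 1) {f : α → ℝ≥0∞} (hf : AEMeasurable f μ) :
    (∫⁻ a, f a ∂μ) ^ 2 ≤ ∫⁻ a, f a ^ 2 ∂μ := by
  have hHolder := ENNReal.lintegral_mul_le_Lp_mul_Lq μ Real.HolderConjugate.two_two hf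
    (aemeasurable_const (b := (1 : ℝ≥0∞)))
  simp only [Pi.mul_apply, mul_one, ENNReal.one_rpow, lintegral_one] at hHolder
  have sq_sqrt : ∀ x : ℝ≥0∞, (x ^ ((1 : ℝ) / 2)) ^ 2 = x := fun x => by
    rw [← ENNReal.rpow_natCast, ← ENNReal.rpow_mul]; norm_num
  calc (∫⁻ a, f a ∂μ) ^ 2
      ≤ ((∫⁻ a, f a ^ (2 : ℝ) ∂μ) ^ ((1 : ℝ) / 2) * μ univ ^ ((1 : ℝ) / 2)) ^ 2 := by gcongr
    _ = (∫⁻ a, f a ^ 2 ∂μ) * μ univ := by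
        simp only [mul_pow, sq_sqrt, ENNReal.rpow_two]
    _ ≤ ∫⁻ a, f a ^ 2 ∂μ := mul_le_of_le_one_right' hμ

theorem ENNReal.sq_lintegral_mul_le {α : Type*} [MeasurableSpace α] {μ : Measure α}
    {w f : α → ℝ≥0∞} (hw : AEMeasurable w μ) (hf : AEMeasurable f μ)
    (hw_one : ∫⁻ a, w a ∂μ ≤ 1) :
    (∫⁻ a, w a * f a ∂μ) ^ 2 ≤ ∫⁻ a, w a * f a ^ 2 ∂μ := by
  have hf' : AEMeasurable f (μ.withDensity w) :=
    hf.mono_ac (withDensity_absolutelyContinuous μ w)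
  have hmass : μ.withDensity w univ ≤ 1 := by
    rwa [withDensity_apply _ MeasurableSet.univ, Measure.restrict_univ]
  have h := ENNReal.sq_lintegral_le_of_measure_univ_le_one hmass hf'
  rwa [lintegral_withDensity_eq_lintegral_mul₀ hw hf,
    lintegral_withDensity_eq_lintegral_mul₀ hw (hf.pow_const 2)] at h

section

local notation "E3" => EuclideanSpace ℝ (Fin 3)
local notation "S2" => Metric.sphere (0 : E3) 1

instance : IsFiniteMeasure sphereMeasure := by unfold sphereMeasure; infer_instance

lemma gaussM_nonneg (v : E3) : 0 ≤ gaussM v := by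
  unfold gaussM; positivity

lemma measurable_gaussM : Measurable gaussM := by
  unfold gaussM; fun_prop

def sqrtCollDiff (G : E3 → ℝ) (v v₁ : E3) (ω : S2) : ℝ :=
  Real.sqrt (G (collV ω v v₁) * G (collV₁ ω v v₁)) - Real.sqrt (G v * G v₁)

variable {b : E3 → S2 → ℝ} {G : E3 → ℝ}

lemma measurable_sqrtCollDiff (hG : Measurable G) :
    Measurable fun q : (E3 × E3) × S2 => sqrtCollDiff G q.1.1 q.1.2 q.2 := by
  have hV : Measurable fun q : (E3 × E3) × S2 => G (collV q.2 q.1.1 q.1.2) :=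
    hG.comp (by unfold collV; fun_prop)
  have hV₁ : Measurable fun q : (E3 × E3) × S2 => G (collV₁ q.2 q.1.1 q.1.2) :=
    hG.comp (by unfold collV₁; fun_prop)
  have hG' : Measurable fun q : (E3 × E3) × S2 => G q.1.1 * G q.1.2 := by fun_prop
  exact (hV.mul hV₁).sqrt.sub hG'.sqrt

lemma measurable_sqrtCollDiff_prodMk (hG : Measurable G) (v : E3) :
    Measurable fun p : E3 × S2 => sqrtCollDiff G v p.1 p.2 :=
  (measurable_sqrtCollDiff hG).comp (f := fun p : E3 × S2 => ((v, p.1), p.2)) (by fun_prop)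

def collWeight (b : E3 → S2 → ℝ) (v : E3) (p : E3 × S2) : ℝ≥0∞ :=
  ENNReal.ofReal (gaussM p.1) * ENNReal.ofReal (b (v - p.1) p.2)

lemma measurable_collWeight (hb : Measurable (Function.uncurry b)) (v : E3) :
    Measurable (collWeight b v) := by
  have hb' : Measurable fun p : E3 × S2 => b (v - p.1) p.2 :=
    hb.comp (f := fun p : E3 × S2 => (v - p.1, p.2)) (by fun_prop)
  exact (measurable_gaussM.comp measurable_fst).ennreal_ofReal.mul hb'.ennreal_ofReal

lemma lintegral_collWeight (hb : Measurable (Function.uncurry b)) (v : E3) :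
    ∫⁻ p, collWeight b v p ∂(volume.prod sphereMeasure)
      = ∫⁻ v₁, ENNReal.ofReal (gaussM v₁) *
          ∫⁻ ω, ENNReal.ofReal (b (v - v₁) ω) ∂sphereMeasure := by
  rw [lintegral_prod _ (measurable_collWeight hb v).aemeasurable]
  simp only [collWeight]
  exact lintegral_congr fun v₁ => lintegral_const_mul' _ _ ENNReal.ofReal_ne_top

lemma QtildeSqrt_eq_integral_integral (v : E3) :
    QtildeSqrt b G v
      = ∫ v₁, ∫ ω, sqrtCollDiff G v v₁ ω * b (v - v₁) ω * gaussM v₁ ∂sphereMeasure := by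
  simp only [QtildeSqrt, ← integral_mul_const]
  rfl

lemma enorm_QtildeSqrt_le (hb : Measurable (Function.uncurry b)) (hb0 : ∀ z ω, 0 ≤ b z ω)
    (hG : Measurable G) (v : E3) :
    ‖QtildeSqrt b G v‖ₑ
      ≤ ∫⁻ p, collWeight b v p * ‖sqrtCollDiff G v p.1 p.2‖ₑ ∂(volume.prod sphereMeasure) := by
  rw [lintegral_prod (fun p => collWeight b v p * ‖sqrtCollDiff G v p.1 p.2‖ₑ)
      ((measurable_collWeight hb v).mul (measurable_sqrtCollDiff_prodMk hG v).enorm).aemeasurable,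
    QtildeSqrt_eq_integral_integral]
  refine (enorm_integral_le_lintegral_enorm _).trans (lintegral_mono fun v₁ => ?_)
  refine (enorm_integral_le_lintegral_enorm _).trans_eq (lintegral_congr fun ω => ?_)
  rw [enorm_mul, enorm_mul, Real.enorm_eq_ofReal (hb0 _ _),
    Real.enorm_eq_ofReal (gaussM_nonneg _), collWeight]
  ring

lemma ofReal_sq_QtildeSqrt_le (hb : Measurable (Function.uncurry b)) (hb0 : ∀ z ω, 0 ≤ b z ω)
    (hG : Measurable G) {v : E3}
    (hv : ∫⁻ v₁, ENNReal.ofReal (gaussM v₁) *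
      ∫⁻ ω, ENNReal.ofReal (b (v - v₁) ω) ∂sphereMeasure ≤ 1) :
    ENNReal.ofReal (QtildeSqrt b G v ^ 2)
      ≤ ∫⁻ p, collWeight b v p * ENNReal.ofReal (sqrtCollDiff G v p.1 p.2 ^ 2)
          ∂(volume.prod sphereMeasure) := by
  have ofReal_sq (x : ℝ) : ENNReal.ofReal (x ^ 2) = ‖x‖ₑ ^ 2 := by
    rw [Real.enorm_eq_ofReal_abs, ← ENNReal.ofReal_pow (abs_nonneg x), sq_abs]
  simp only [ofReal_sq]
  calc ‖QtildeSqrt b G v‖ₑ ^ 2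
      ≤ (∫⁻ p, collWeight b v p * ‖sqrtCollDiff G v p.1 p.2‖ₑ
          ∂(volume.prod sphereMeasure)) ^ 2 := by
        gcongr; exact enorm_QtildeSqrt_le hb hb0 hG v
    _ ≤ _ := ENNReal.sq_lintegral_mul_le (measurable_collWeight hb v).aemeasurable
        (measurable_sqrtCollDiff_prodMk hG v).enorm.aemeasurable
        ((lintegral_collWeight hb v).trans_le hv)

lemma lintegral_collMeasure (hb : Measurable (Function.uncurry b)) (hb0 : ∀ z ω, 0 ≤ b z ω)
    {f : (E3 × E3) × S2 → ℝ≥0∞} (hf : Measurable f) :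
    ∫⁻ q, f q ∂collMeasure b
      = ∫⁻ v, ENNReal.ofReal (gaussM v) *
          ∫⁻ p, collWeight b v p * f ((v, p.1), p.2) ∂(volume.prod sphereMeasure) := by
  have hdens : Measurable fun q : (E3 × E3) × S2 =>
      ENNReal.ofReal (b (q.1.1 - q.1.2) q.2 * gaussM q.1.1 * gaussM q.1.2) := by
    have hb' : Measurable fun q : (E3 × E3) × S2 => b (q.1.1 - q.1.2) q.2 :=
      hb.comp (f := fun q : (E3 × E3) × S2 => (q.1.1 - q.1.2, q.2)) (by fun_prop)
    exact (hb'.mul (measurable_gaussM.comp (by fun_prop))).mul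
      (measurable_gaussM.comp (by fun_prop)) |>.ennreal_ofReal
  have hassoc := (measurePreserving_prodAssoc (volume : Measure E3) (volume : Measure E3)
    sphereMeasure).symm
  rw [collMeasure, lintegral_withDensity_eq_lintegral_mul _ hdens hf, Measure.volume_eq_prod,
    ← hassoc.lintegral_comp_emb (MeasurableEquiv.measurableEmbedding _),
    lintegral_prod _ (by exact ((hdens.mul hf).comp hassoc.measurable).aemeasurable)]
  refine lintegral_congr fun v => ?_
  rw [← lintegral_const_mul' _ _ ENNReal.ofReal_ne_top]
  refine lintegral_congr fun p => ?_
  change ENNReal.ofReal (b (v - p.1) p.2 * gaussM v * gaussM p.1) * f ((v, p.1), p.2) = _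
  rw [ENNReal.ofReal_mul (mul_nonneg (hb0 _ _) (gaussM_nonneg _)), ENNReal.ofReal_mul (hb0 _ _),
    collWeight]
  ring

end

theorem QtildeSqrt_l2_bound_general
    (btilde : EuclideanSpace ℝ (Fin 3) →
      Metric.sphere (0 : EuclideanSpace ℝ (Fin 3)) 1 → ℝ)
    (hbm : Measurable (Function.uncurry btilde)) (hb0 : ∀ z ϖ, 0 ≤ btilde z ϖ)
    (hbsup : ∀ v : EuclideanSpace ℝ (Fin 3),
      ∫⁻ v₁, ENNReal.ofReal (gaussM v₁) *
          ∫⁻ ω, ENNReal.ofReal (btilde (v - v₁) ω) ∂sphereMeasure ≤ 1)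
    (G : EuclideanSpace ℝ (Fin 3) → ℝ) (hGm : Measurable G) :
    ∫⁻ v, ENNReal.ofReal ((QtildeSqrt btilde G v) ^ 2 * gaussM v)
      ≤ ∫⁻ q, ENNReal.ofReal
          ((Real.sqrt (G (collV (q.2 : EuclideanSpace ℝ (Fin 3)) q.1.1 q.1.2) *
                G (collV₁ (q.2 : EuclideanSpace ℝ (Fin 3)) q.1.1 q.1.2))
            - Real.sqrt (G q.1.1 * G q.1.2)) ^ 2) ∂(collMeasure btilde) := by
  change _ ≤ ∫⁻ q, ENNReal.ofReal (sqrtCollDiff G q.1.1 q.1.2 q.2 ^ 2) ∂collMeasure btilde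
  rw [lintegral_collMeasure hbm hb0 ((measurable_sqrtCollDiff hGm).pow_const 2).ennreal_ofReal]
  refine lintegral_mono fun v => ?_
  rw [ENNReal.ofReal_mul' (gaussM_nonneg v), mul_comm]
  gcongr
  exact ofReal_sq_QtildeSqrt_le hbm hb0 hGm (hbsup v)

/-- If the kernel `b̃ ≥ 0` has the collision symmetries and satisfies
`sup_v ∬ b̃(v−v₁,ω) M₁ dv₁ dω ≤ 1`, then for every measurable `G ≥ 0`,
`∫ Q̃(√G,√G)(v)² M(v) dv ≤ ∭ (√(G′G′₁) − √(GG₁))² dμ̃`. -/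
theorem QtildeSqrt_l2_bound
    (btilde : EuclideanSpace ℝ (Fin 3) →
      Metric.sphere (0 : EuclideanSpace ℝ (Fin 3)) 1 → ℝ)
    (hbm : Measurable (Function.uncurry btilde)) (hb0 : ∀ z ϖ, 0 ≤ btilde z ϖ)
    (hbsym : ∀ᵐ q ∂(((volume :
          Measure (EuclideanSpace ℝ (Fin 3) × EuclideanSpace ℝ (Fin 3))).prod
        sphereMeasure)),
      btilde (q.1.1 - q.1.2) q.2 = btilde (q.1.2 - q.1.1) q.2 ∧
      btilde (q.1.1 - q.1.2) q.2
        = btilde (collV (q.2 : EuclideanSpace ℝ (Fin 3)) q.1.1 q.1.2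
            - collV₁ (q.2 : EuclideanSpace ℝ (Fin 3)) q.1.1 q.1.2) q.2)
    (hbsup : ∀ v : EuclideanSpace ℝ (Fin 3),
      ∫⁻ v₁, ENNReal.ofReal (gaussM v₁) *
          ∫⁻ ω, ENNReal.ofReal (btilde (v - v₁) ω) ∂sphereMeasure ≤ 1)
    (G : EuclideanSpace ℝ (Fin 3) → ℝ) (hGm : Measurable G) (hG0 : ∀ v, 0 ≤ G v) :
    ∫⁻ v, ENNReal.ofReal ((QtildeSqrt btilde G v) ^ 2 * gaussM v)
      ≤ ∫⁻ q, ENNReal.ofReal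
          ((Real.sqrt (G (collV (q.2 : EuclideanSpace ℝ (Fin 3)) q.1.1 q.1.2) *
                G (collV₁ (q.2 : EuclideanSpace ℝ (Fin 3)) q.1.1 q.1.2))
            - Real.sqrt (G q.1.1 * G q.1.2)) ^ 2) ∂(collMeasure btilde) :=
  QtildeSqrt_l2_bound_general btilde hbm hb0 hbsup G hGm

end
end
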